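/- arXiv:1208.4993 — 5 statements merged into one kernel-verified Lean document; each statement's English description precedes it below -/
import Mathlib

section
/- For all MTL formulas φ, ψ, χ, θ and every rational q > 0, the following equivalence holds over all signals: θ U_{(0,q)} ((φ U ψ) ∧ χ) ↔ [θ U_{(0,q)} ((φ U_{(0,q)} ψ) ∧ χ)] ∨ [(θ U_{(0,q)} (□_{(0,q)} φ ∧ χ)) ∧ ◇_{={q}} (φ U ψ)]. -/
open scoped NNRat

/-- An interval `I ⊆ (0,∞)` with endpoints in `ℚ≥0 ∪ {∞}`, used to constrain
MTL temporal operators.  `lo` is the left endpoint, `hi` the right endpoint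
(`⊤` meaning `∞`), and the two Booleans record whether the corresponding
endpoint is included. -/
structure MTLIv where
  lo : ℚ≥0
  hi : WithTop ℚ≥0
  loClosed : Bool
  hiClosed : Bool

namespace MTLIv

/-- Membership of a real number in the interval (intersected with `(0,∞)`). -/
def mem (I : MTLIv) (t : ℝ) : Prop :=
  0 < t ∧
  (if I.loClosed then (I.lo : ℝ) ≤ t else (I.lo : ℝ) < t) ∧
  (∀ q : ℚ≥0, I.hi = (q : WithTop ℚ≥0) →
    (if I.hiClosed then t ≤ (q : ℝ) else t < (q : ℝ)))

/-- An interval is bounded if its right endpoint is not `∞`. -/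
def Bounded (I : MTLIv) : Prop := I.hi ≠ ⊤

/-- Scaling an interval by a positive rational: `r • I = {r·t : t ∈ I}`. -/
def scale (r : ℚ≥0) (I : MTLIv) : MTLIv :=
  ⟨r * I.lo, I.hi.map (fun q => r * q), I.loClosed, I.hiClosed⟩

end MTLIv

/-- The interval `(0,∞)`. -/
def ivInf : MTLIv := ⟨0, ⊤, false, false⟩
/-- The interval `(0,q)`. -/
def ivLT (q : ℚ≥0) : MTLIv := ⟨0, (q : WithTop ℚ≥0), false, false⟩
/-- The singleton interval `{q}`. -/
def ivEQ (q : ℚ≥0) : MTLIv := ⟨q, (q : WithTop ℚ≥0), true, true⟩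
/-- The open interval `(p,q)`. -/
def ivOO (p q : ℚ≥0) : MTLIv := ⟨p, (q : WithTop ℚ≥0), false, false⟩

/-- Formulas of Metric Temporal Logic over atomic propositions `P`:
`φ ::= true | p | φ ∧ φ | ¬φ | φ U_I φ | φ S_I φ`.
In `until I φ ψ` (i.e. `φ U_I ψ`) the witness formula is `ψ`, and similarly
for `since`. -/
inductive MTL (P : Type*) where
  | tt : MTL P
  | atom : P → MTL P
  | and : MTL P → MTL P → MTL P
  | not : MTL P → MTL P
  | until : MTLIv → MTL P → MTL P → MTL P
  | since : MTLIv → MTL P → MTL P → MTL P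

namespace MTL

variable {P : Type*}

/-- Satisfaction of an MTL formula by a signal `f : ℝ → Set P` at time `r`. -/
def sat (f : ℝ → Set P) : MTL P → ℝ → Prop
  | .tt, _ => True
  | .atom p, r => p ∈ f r
  | .and φ ψ, r => φ.sat f r ∧ ψ.sat f r
  | .not φ, r => ¬ φ.sat f r
  | .until I φ ψ, r =>
      ∃ t, r < t ∧ I.mem (t - r) ∧ ψ.sat f t ∧ ∀ u, r < u → u < t → φ.sat f u
  | .since I φ ψ, r =>
      ∃ t, t < r ∧ I.mem (r - t) ∧ ψ.sat f t ∧ ∀ u, t < u → u < r → φ.sat f u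

/-- Two MTL formulas are equivalent if they are satisfied by exactly the same
pairs (signal, time point). -/
def Equiv (φ ψ : MTL P) : Prop :=
  ∀ (f : ℝ → Set P) (r : ℝ), φ.sat f r ↔ ψ.sat f r

/-- Disjunction, as a derived connective. -/
def or (φ ψ : MTL P) : MTL P := .not (.and (.not φ) (.not ψ))

/-- `◇_I φ := true U_I φ`. -/
def dia (I : MTLIv) (φ : MTL P) : MTL P := .until I .tt φ

/-- `□_I φ := ¬◇_I ¬φ`. -/
def box (I : MTLIv) (φ : MTL P) : MTL P := .not (dia I (.not φ))

/-- `◆_I φ := true S_I φ`. -/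
def pdia (I : MTLIv) (φ : MTL P) : MTL P := .since I .tt φ

/-- `■_I φ := ¬◆_I ¬φ`. -/
def pbox (I : MTLIv) (φ : MTL P) : MTL P := .not (pdia I (.not φ))

/-- `K⁺φ := ¬((¬φ) U true)`. -/
def kplus (φ : MTL P) : MTL P := .not (.until ivInf (.not φ) .tt)

/-- A formula is bounded if all intervals occurring in its temporal
operators are bounded. -/
def Bounded : MTL P → Prop
  | .tt => True
  | .atom _ => True
  | .and φ ψ => φ.Bounded ∧ ψ.Bounded
  | .not φ => φ.Bounded
  | .until I φ ψ => I.Bounded ∧ φ.Bounded ∧ ψ.Bounded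
  | .since I φ ψ => I.Bounded ∧ φ.Bounded ∧ ψ.Bounded

/-- All `S_I` operators occurring in the formula are bounded
(`U_I` operators are unrestricted). -/
def SinceOpsBounded : MTL P → Prop
  | .tt => True
  | .atom _ => True
  | .and φ ψ => φ.SinceOpsBounded ∧ ψ.SinceOpsBounded
  | .not φ => φ.SinceOpsBounded
  | .until _ φ ψ => φ.SinceOpsBounded ∧ ψ.SinceOpsBounded
  | .since I φ ψ => I.Bounded ∧ φ.SinceOpsBounded ∧ ψ.SinceOpsBounded

/-- All `U_I` operators occurring in the formula are bounded
(`S_I` operators are unrestricted). -/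
def UntilOpsBounded : MTL P → Prop
  | .tt => True
  | .atom _ => True
  | .and φ ψ => φ.UntilOpsBounded ∧ ψ.UntilOpsBounded
  | .not φ => φ.UntilOpsBounded
  | .until I φ ψ => I.Bounded ∧ φ.UntilOpsBounded ∧ ψ.UntilOpsBounded
  | .since _ φ ψ => φ.UntilOpsBounded ∧ ψ.UntilOpsBounded

/-- No unbounded temporal operator occurs within the scope of a bounded
temporal operator. -/
def NoUnboundedInBounded : MTL P → Prop
  | .tt => True
  | .atom _ => True
  | .and φ ψ => φ.NoUnboundedInBounded ∧ ψ.NoUnboundedInBounded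
  | .not φ => φ.NoUnboundedInBounded
  | .until I φ ψ => (I.Bounded → φ.Bounded ∧ ψ.Bounded) ∧
      φ.NoUnboundedInBounded ∧ ψ.NoUnboundedInBounded
  | .since I φ ψ => (I.Bounded → φ.Bounded ∧ ψ.Bounded) ∧
      φ.NoUnboundedInBounded ∧ ψ.NoUnboundedInBounded

/-- The future-reach of an MTL formula, with values in `ℚ≥0 ∪ {∞}`. -/
def fr : MTL P → WithTop ℚ≥0
  | .tt => 0
  | .atom _ => 0
  | .and φ ψ => max φ.fr ψ.fr
  | .not φ => φ.fr
  | .until I φ ψ => I.hi + max φ.fr ψ.fr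
  | .since I φ ψ => max φ.fr (ψ.fr.map (fun a => a - I.lo))

/-- The past-reach of an MTL formula, with values in `ℚ≥0 ∪ {∞}`. -/
def pr : MTL P → WithTop ℚ≥0
  | .tt => 0
  | .atom _ => 0
  | .and φ ψ => max φ.pr ψ.pr
  | .not φ => φ.pr
  | .since I φ ψ => I.hi + max φ.pr ψ.pr
  | .until I φ ψ => max φ.pr (ψ.pr.map (fun a => a - I.lo))

/-- Boolean combinations of formulas from the class `C`. -/
inductive BoolComb (C : MTL P → Prop) : MTL P → Prop
  | base {φ} : C φ → BoolComb C φ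
  | tt : BoolComb C .tt
  | and {φ ψ} : BoolComb C φ → BoolComb C ψ → BoolComb C (.and φ ψ)
  | not {φ} : BoolComb C φ → BoolComb C (.not φ)

/-- Scaling an MTL formula by a positive rational: every constraining
interval `I` is replaced by `rI`. -/
def scale (r : ℚ≥0) : MTL P → MTL P
  | .tt => .tt
  | .atom p => .atom p
  | .and φ ψ => .and (φ.scale r) (ψ.scale r)
  | .not φ => .not (φ.scale r)
  | .until I φ ψ => .until (I.scale r) (φ.scale r) (ψ.scale r)
  | .since I φ ψ => .since (I.scale r) (φ.scale r) (ψ.scale r)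

end MTL

/-- Terms of QMLO: `t ::= x | t + q` with `q ∈ ℚ` (variables are
represented by natural numbers). -/
inductive QTerm where
  | var : ℕ → QTerm
  | add : QTerm → ℚ → QTerm

namespace QTerm

/-- Value of a term under a valuation of the variables. -/
def val (v : ℕ → ℝ) : QTerm → ℝ
  | .var x => v x
  | .add t q => t.val v + (q : ℝ)

/-- The (unique) variable occurring in a term. -/
def fvar : QTerm → ℕ
  | .var x => x
  | .add t _ => t.fvar

/-- Every shift in the term is `+1`; these are exactly the terms of
`FO(<,+1)`. -/
def OnlyPlusOne : QTerm → Prop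
  | .var _ => True
  | .add t q => q = 1 ∧ t.OnlyPlusOne

/-- Every shift in the term is an integer. -/
def IntShifts : QTerm → Prop
  | .var _ => True
  | .add t q => q.den = 1 ∧ t.IntShifts

/-- The term uses no `+q` function at all (terms of `FO(<)`). -/
def NoShifts : QTerm → Prop
  | .var _ => True
  | .add _ _ => False

/-- Substitution of the term `s` for the variable `y`. -/
def subst (y : ℕ) (s : QTerm) : QTerm → QTerm
  | .var z => if z = y then s else .var z
  | .add t q => .add (subst y s t) q

end QTerm

/-- Formulas of QMLO, the monadic logic of order and metric: first-order
logic with `<`, monadic predicates drawn from `P`, and `+q` (`q ∈ ℚ`). -/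
inductive QMLO (P : Type*) where
  | tt : QMLO P
  | pred : P → QTerm → QMLO P
  | lt : QTerm → QTerm → QMLO P
  | and : QMLO P → QMLO P → QMLO P
  | not : QMLO P → QMLO P
  | ex : ℕ → QMLO P → QMLO P

namespace QMLO

variable {P : Type*}

/-- Satisfaction of a QMLO formula over the reals, by a signal
`f : ℝ → Set P` and a valuation `v` of the variables. -/
def sat (f : ℝ → Set P) : QMLO P → (ℕ → ℝ) → Prop
  | .tt, _ => True
  | .pred p t, v => p ∈ f (t.val v)
  | .lt t₁ t₂, v => t₁.val v < t₂.val v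
  | .and φ ψ, v => φ.sat f v ∧ ψ.sat f v
  | .not φ, v => ¬ φ.sat f v
  | .ex x φ, v => ∃ r : ℝ, φ.sat f (Function.update v x r)

/-- The free variables of a QMLO formula. -/
def freeVars : QMLO P → Set ℕ
  | .tt => ∅
  | .pred _ t => {t.fvar}
  | .lt t₁ t₂ => {t₁.fvar, t₂.fvar}
  | .and φ ψ => φ.freeVars ∪ ψ.freeVars
  | .not φ => φ.freeVars
  | .ex x φ => φ.freeVars \ {x}

/-- All terms use only the `+1` function: the formula belongs to
`FO(<,+1)`. -/
def OnlyPlusOne : QMLO P → Prop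
  | .tt => True
  | .pred _ t => t.OnlyPlusOne
  | .lt t₁ t₂ => t₁.OnlyPlusOne ∧ t₂.OnlyPlusOne
  | .and φ ψ => φ.OnlyPlusOne ∧ ψ.OnlyPlusOne
  | .not φ => φ.OnlyPlusOne
  | .ex _ φ => φ.OnlyPlusOne

/-- All shifts occurring in the formula are integers: the formula belongs to
`FO(<,+1)` up to the standard arithmetical shorthand. -/
def IntShifts : QMLO P → Prop
  | .tt => True
  | .pred _ t => t.IntShifts
  | .lt t₁ t₂ => t₁.IntShifts ∧ t₂.IntShifts
  | .and φ ψ => φ.IntShifts ∧ ψ.IntShifts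
  | .not φ => φ.IntShifts
  | .ex _ φ => φ.IntShifts

/-- The formula uses no `+q` function at all: it belongs to `FO(<)`. -/
def NoShifts : QMLO P → Prop
  | .tt => True
  | .pred _ t => t.NoShifts
  | .lt t₁ t₂ => t₁.NoShifts ∧ t₂.NoShifts
  | .and φ ψ => φ.NoShifts ∧ ψ.NoShifts
  | .not φ => φ.NoShifts
  | .ex _ φ => φ.NoShifts

/-- Substitution of the term `s` for the free occurrences of variable `y`. -/
def subst (y : ℕ) (s : QTerm) : QMLO P → QMLO P
  | .tt => .tt
  | .pred p t => .pred p (t.subst y s)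
  | .lt t₁ t₂ => .lt (t₁.subst y s) (t₂.subst y s)
  | .and φ ψ => .and (subst y s φ) (subst y s ψ)
  | .not φ => .not (subst y s φ)
  | .ex z φ => .ex z (if z = y then φ else subst y s φ)

/-- Scaling of a QMLO formula by a rational `r`: every function symbol `+q`
is replaced by `+(r·q)`. -/
def scale (r : ℚ) : QMLO P → QMLO P
  | .tt => .tt
  | .pred p t => .pred p (tscale t)
  | .lt t₁ t₂ => .lt (tscale t₁) (tscale t₂)
  | .and φ ψ => .and (φ.scale r) (ψ.scale r)
  | .not φ => .not (φ.scale r)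
  | .ex x φ => .ex x (φ.scale r)
where
  /-- scaling of terms -/
  tscale : QTerm → QTerm
  | .var x => .var x
  | .add t q => .add (tscale t) (r * q)

end QMLO

/-- `Bet t₁ t₂ B φ` expresses that `φ` belongs to the class `Bet(t₁,t₂)`,
where `B` is the ambient set of bound variables: every quantified subformula
has the form `∃z ((t₁ ≤ z < t₂) ∧ χ)` (with `t₁ ≤ z` rendered as
`¬(z < t₁)`), and every atomic subformula `P(t)` has `t` a bound occurrence
of a variable. -/
inductive Bet {P : Type*} (t₁ t₂ : QTerm) : Set ℕ → QMLO P → Prop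
  | tt {B} : Bet t₁ t₂ B .tt
  | pred {B} (p : P) (z : ℕ) (h : z ∈ B) : Bet t₁ t₂ B (.pred p (.var z))
  | lt {B} (s₁ s₂ : QTerm) : Bet t₁ t₂ B (.lt s₁ s₂)
  | and {B φ ψ} : Bet t₁ t₂ B φ → Bet t₁ t₂ B ψ → Bet t₁ t₂ B (.and φ ψ)
  | not {B φ} : Bet t₁ t₂ B φ → Bet t₁ t₂ B (.not φ)
  | ex {B φ} (z : ℕ) :
      Bet t₁ t₂ (B ∪ {z}) φ →
      Bet t₁ t₂ B (.ex z (.and (.and (.not (.lt (.var z) t₁)) (.lt (.var z) t₂)) φ))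
lemma mem_ivLT {q : ℚ≥0} {x : ℝ} : (ivLT q).mem x ↔ 0 < x ∧ x < (q : ℝ) := by
  simp only [ivLT, MTLIv.mem]
  constructor
  · rintro ⟨h0, -, h⟩
    exact ⟨h0, by simpa using h q rfl⟩
  · rintro ⟨h0, h⟩
    exact ⟨h0, by simpa using h0, fun q' hq' => by
      simp only [WithTop.coe_inj] at hq'; simpa [← hq'] using h⟩

lemma mem_ivInf {x : ℝ} : ivInf.mem x ↔ 0 < x := by
  simp only [ivInf, MTLIv.mem]
  constructor
  · rintro ⟨h0, -⟩; exact h0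
  · intro h0; exact ⟨h0, by simpa using h0, fun q' hq' => by simp at hq'⟩

lemma mem_ivEQ {q : ℚ≥0} {x : ℝ} (hq : 0 < q) : (ivEQ q).mem x ↔ x = (q : ℝ) := by
  simp only [ivEQ, MTLIv.mem]
  constructor
  · rintro ⟨-, hle, h⟩
    exact le_antisymm (by simpa using h q rfl) (by simpa using hle)
  · rintro rfl
    exact ⟨by exact_mod_cast hq, by simp, fun q' hq' => by
      simp only [WithTop.coe_inj] at hq'; simp [hq']⟩

/-- `θ U_{(0,q)} ((φ U ψ) ∧ χ) ↔
[θ U_{(0,q)} ((φ U_{(0,q)} ψ) ∧ χ)] ∨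
[(θ U_{(0,q)} (□_{(0,q)} φ ∧ χ)) ∧ ◇_{=q} (φ U ψ)]`. -/
theorem until_extract_until {P : Type*} [Countable P] (φ ψ χ θ : MTL P)
    (q : ℚ≥0) (hq : 0 < q) :
    MTL.Equiv
      (.until (ivLT q) θ (.and (.until ivInf φ ψ) χ))
      (MTL.or
        (.until (ivLT q) θ (.and (.until (ivLT q) φ ψ) χ))
        (.and (.until (ivLT q) θ (.and (MTL.box (ivLT q) φ) χ))
              (MTL.dia (ivEQ q) (.until ivInf φ ψ)))) := by
  intro f r
  simp only [MTL.or, MTL.box, MTL.dia, MTL.sat, mem_ivLT, mem_ivInf, mem_ivEQ hq]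
  rw [← or_iff_not_and_not]
  constructor
  · rintro ⟨t, hrt, ⟨ht0, htq⟩, ⟨⟨s, hts, hst0, hψs, hφ⟩, hχ⟩, hθ⟩
    rcases lt_or_ge (s - t) (q : ℝ) with hcase | hcase
    · exact Or.inl ⟨t, hrt, ⟨ht0, htq⟩, ⟨⟨s, hts, ⟨hst0, hcase⟩, hψs, hφ⟩, hχ⟩, hθ⟩
    · refine Or.inr ⟨⟨t, hrt, ⟨ht0, htq⟩, ⟨?_, hχ⟩, hθ⟩,
        r + q, by linarith, by ring_nf, ⟨s, ?_, ?_, hψs, ?_⟩, fun _ _ _ => trivial⟩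
      · rintro ⟨u, htu, ⟨hu0, huq⟩, hnφ, -⟩
        exact hnφ (hφ u htu (by linarith))
      · linarith
      · linarith
      · intro u hu1 hu2
        exact hφ u (by linarith) (by linarith)
  · rintro (⟨t, hrt, hmem, ⟨⟨s, hts, ⟨hst0, -⟩, hψs, hφ⟩, hχ⟩, hθ⟩ |
      ⟨⟨t, hrt, ⟨ht0, htq⟩, ⟨hbox, hχ⟩, hθ⟩, s, hrs, hseq, ⟨w, hsw, hsw0, hψw, hφw⟩, -⟩)
    · exact ⟨t, hrt, hmem, ⟨⟨s, hts, hst0, hψs, hφ⟩, hχ⟩, hθ⟩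
    · have hs : s = r + q := by linarith [sub_eq_iff_eq_add.mp hseq]
      refine ⟨t, hrt, ⟨ht0, htq⟩, ⟨⟨w, by linarith, by linarith, hψw, ?_⟩, hχ⟩, hθ⟩
      intro u htu huw
      rcases lt_or_ge s u with hsu | hsu
      · exact hφw u hsu huw
      · by_contra hnφ
        exact hbox ⟨u, htu, ⟨by linarith, by linarith⟩, hnφ, fun _ _ _ => trivial⟩
end

section
/- For all MTL formulas φ, χ, θ and every rational q > 0, the following equivalence holds over all signals: θ U_{(0,q)} (□ φ ∧ χ) ↔ (θ U_{(0,q)} (□_{(0,q)} φ ∧ χ)) ∧ ◇_{={q}} □ φ. -/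
open scoped NNRat

section Aux

variable {P : Type*}

lemma memInf_iff (t : ℝ) : ivInf.mem t ↔ 0 < t := by
  simp [ivInf, MTLIv.mem]

lemma memLT_iff (q : ℚ≥0) (t : ℝ) : (ivLT q).mem t ↔ 0 < t ∧ t < (q : ℝ) := by
  constructor
  · rintro ⟨h0, -, h2⟩
    exact ⟨h0, h2 q rfl⟩
  · rintro ⟨h0, h2⟩
    refine ⟨h0, by simpa [ivLT] using h0, ?_⟩
    intro q' hq'
    simp only [ivLT] at hq'
    rw [WithTop.coe_inj] at hq'
    simpa [ivLT, ← hq'] using h2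

lemma memEQ_iff (q : ℚ≥0) (hq : 0 < q) (t : ℝ) : (ivEQ q).mem t ↔ t = (q : ℝ) := by
  constructor
  · rintro ⟨h0, h1, h2⟩
    have := h2 q rfl
    simp only [ivEQ] at this h1
    exact le_antisymm (by simpa using this) (by simpa using h1)
  · rintro rfl
    refine ⟨by exact_mod_cast hq, by simp [ivEQ], ?_⟩
    intro q' hq'
    simp only [ivEQ] at hq'
    rw [WithTop.coe_inj] at hq'
    simp [ivEQ, ← hq']

lemma sat_boxInf_iff (f : ℝ → Set P) (φ : MTL P) (r : ℝ) :
    (MTL.box ivInf φ).sat f r ↔ ∀ s, r < s → φ.sat f s := by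
  simp only [MTL.box, MTL.dia, MTL.sat, memInf_iff]
  constructor
  · intro h s hs
    by_contra hns
    exact h ⟨s, hs, by linarith, hns, fun u _ _ => trivial⟩
  · rintro h ⟨t, ht, -, hnt, -⟩
    exact hnt (h t ht)

lemma sat_boxLT_iff (f : ℝ → Set P) (φ : MTL P) (q : ℚ≥0) (r : ℝ) :
    (MTL.box (ivLT q) φ).sat f r ↔ ∀ s, r < s → s < r + (q : ℝ) → φ.sat f s := by
  simp only [MTL.box, MTL.dia, MTL.sat, memLT_iff]
  constructor
  · intro h s hs hs'
    by_contra hns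
    exact h ⟨s, hs, ⟨by linarith, by linarith⟩, hns, fun u _ _ => trivial⟩
  · rintro h ⟨t, ht, hmem, hnt, -⟩
    exact hnt (h t ht (by linarith [hmem.2]))

end Aux

/-- `θ U_{(0,q)} (□ φ ∧ χ) ↔
(θ U_{(0,q)} (□_{(0,q)} φ ∧ χ)) ∧ ◇_{=q} □ φ`. -/
theorem until_extract_box {P : Type*} [Countable P] (φ χ θ : MTL P)
    (q : ℚ≥0) (hq : 0 < q) :
    MTL.Equiv
      (.until (ivLT q) θ (.and (MTL.box ivInf φ) χ))
      (.and (.until (ivLT q) θ (.and (MTL.box (ivLT q) φ) χ))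
            (MTL.dia (ivEQ q) (MTL.box ivInf φ))) := by
  intro f r
  constructor
  · rintro ⟨t, hrt, hmem, ⟨hbox, hχ⟩, hθ⟩
    rw [memLT_iff] at hmem
    rw [sat_boxInf_iff] at hbox
    constructor
    · refine ⟨t, hrt, (memLT_iff q _).2 hmem, ⟨?_, hχ⟩, hθ⟩
      rw [sat_boxLT_iff]
      intro s hs _
      exact hbox s hs
    · refine ⟨r + (q : ℝ), by linarith [hmem.2], ?_, ?_, fun u _ _ => trivial⟩
      · rw [memEQ_iff q hq]; ring
      · rw [sat_boxInf_iff]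
        intro s hs
        exact hbox s (by linarith [hmem.2])
  · rintro ⟨⟨t, hrt, hmem, ⟨hbox, hχ⟩, hθ⟩, t', hrt', hmem', hbox', -⟩
    rw [memLT_iff] at hmem
    rw [memEQ_iff q hq] at hmem'
    rw [sat_boxLT_iff] at hbox
    rw [sat_boxInf_iff] at hbox'
    have ht' : t' = r + (q : ℝ) := by linarith [hmem']
    refine ⟨t, hrt, (memLT_iff q _).2 hmem, ⟨?_, hχ⟩, hθ⟩
    rw [sat_boxInf_iff]
    intro s hs
    rcases lt_or_ge s (t + (q : ℝ)) with h | h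
    · exact hbox s hs h
    · exact hbox' s (by rw [ht']; linarith [hmem.1])
end

section
/- For all MTL formulas φ, ψ, χ, θ and every rational q > 0, the following equivalence holds over all signals: θ U_{(0,q)} ((φ S ψ) ∧ χ) ↔ [θ U_{(0,q)} ((φ S_{(0,q)} ψ) ∧ χ)] ∨ [(θ U_{(0,q)} (■_{(0,q)} φ ∧ χ)) ∧ (φ S ψ)]. -/
open scoped NNRat

/-
If `φ S ψ` holds at `t` with witness `s`, then either `t - s < q`, or `s ≤ t - q < r` and the same
witness serves at `r` while `φ` holds throughout `(t - q, t)`. Conversely, for `r ≤ t < r + q` the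
intervals `(s, r)` and `(t - q, t)` cover `(s, t)`, so the two cases recombine.
-/

namespace MTLIv

@[simp]
lemma mem_ivInf {t : ℝ} : ivInf.mem t ↔ 0 < t := by
  simp [mem, ivInf]

@[simp]
lemma mem_ivLT {q : ℚ≥0} {t : ℝ} : (ivLT q).mem t ↔ 0 < t ∧ t < q := by
  simp only [mem, ivLT, NNRat.cast_zero, Bool.false_eq_true, if_false, WithTop.coe_inj,
    forall_eq']
  exact and_congr_right fun ht => and_iff_right ht

end MTLIv

namespace MTL

variable {P : Type*} (f : ℝ → Set P)

@[simp]
lemma sat_and (φ ψ : MTL P) (r : ℝ) : (φ.and ψ).sat f r ↔ φ.sat f r ∧ ψ.sat f r := Iff.rfl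

@[simp]
lemma sat_or (φ ψ : MTL P) (r : ℝ) : (φ.or ψ).sat f r ↔ φ.sat f r ∨ ψ.sat f r := by
  simp only [MTL.or, sat]
  tauto

lemma sat_until_ivLT (q : ℚ≥0) (θ φ : MTL P) (r : ℝ) :
    (MTL.until (ivLT q) θ φ).sat f r ↔
      ∃ t, r < t ∧ t - r < q ∧ φ.sat f t ∧ ∀ u, r < u → u < t → θ.sat f u := by
  simp only [sat, MTLIv.mem_ivLT, sub_pos]
  exact exists_congr fun t => and_congr_right fun hrt => by simp [hrt]

lemma sat_since_ivInf (φ ψ : MTL P) (t : ℝ) :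
    (since ivInf φ ψ).sat f t ↔
      ∃ s, s < t ∧ ψ.sat f s ∧ ∀ u, s < u → u < t → φ.sat f u := by
  simp only [sat, MTLIv.mem_ivInf, sub_pos]
  exact exists_congr fun s => and_congr_right fun hst => by simp [hst]

lemma sat_since_ivLT (q : ℚ≥0) (φ ψ : MTL P) (t : ℝ) :
    (since (ivLT q) φ ψ).sat f t ↔
      ∃ s, s < t ∧ t - s < q ∧ ψ.sat f s ∧ ∀ u, s < u → u < t → φ.sat f u := by
  simp only [sat, MTLIv.mem_ivLT, sub_pos]
  exact exists_congr fun s => and_congr_right fun hst => by simp [hst]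

lemma sat_pbox_ivLT (q : ℚ≥0) (φ : MTL P) (t : ℝ) :
    (pbox (ivLT q) φ).sat f t ↔ ∀ u, u < t → t - u < q → φ.sat f u := by
  simp only [pbox, pdia, sat, MTLIv.mem_ivLT, sub_pos]
  push Not
  exact forall_congr' fun u => by tauto

lemma sat_since_ivInf_iff_of_le_of_sub_lt {q : ℚ≥0} {φ ψ : MTL P} {r t : ℝ} (hrt : r ≤ t)
    (htr : t - r < q) :
    (since ivInf φ ψ).sat f t ↔
      (since (ivLT q) φ ψ).sat f t ∨ ((pbox (ivLT q) φ).sat f t ∧ (since ivInf φ ψ).sat f r) := by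
  simp only [sat_since_ivInf, sat_since_ivLT, sat_pbox_ivLT]
  constructor
  · rintro ⟨s, hst, hψ, hφ⟩
    by_cases hts : t - s < q
    · exact .inl ⟨s, hst, hts, hψ, hφ⟩
    · push Not at hts
      refine .inr ⟨fun u hut hu => hφ u (by linarith) hut,
        s, by linarith, hψ, fun u hsu hur => hφ u hsu (by linarith)⟩
  · rintro (⟨s, hst, -, hψ, hφ⟩ | ⟨hbox, s, hsr, hψ, hφ⟩)
    · exact ⟨s, hst, hψ, hφ⟩
    · refine ⟨s, by linarith, hψ, fun u hsu hut => ?_⟩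
      rcases lt_or_ge u r with hur | hru
      · exact hφ u hsu hur
      · exact hbox u hut (by linarith)

end MTL

open MTL in
theorem until_extract_since_general {P : Type*} (φ ψ χ θ : MTL P)
    (q : ℚ≥0) :
    MTL.Equiv
      (.until (ivLT q) θ (.and (.since ivInf φ ψ) χ))
      (MTL.or
        (.until (ivLT q) θ (.and (.since (ivLT q) φ ψ) χ))
        (.and (.until (ivLT q) θ (.and (MTL.pbox (ivLT q) φ) χ))
              (.since ivInf φ ψ))) := by
  intro f r
  have split {t} (hrt : r < t) (htr : t - r < q) :=
    sat_since_ivInf_iff_of_le_of_sub_lt f (φ := φ) (ψ := ψ) hrt.le htr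
  simp only [sat_or, sat_and, sat_until_ivLT]
  constructor
  · rintro ⟨t, hrt, htr, ⟨hS, hχ⟩, hθ⟩
    rcases (split hrt htr).1 hS with hS' | ⟨hbox, hSr⟩
    · exact .inl ⟨t, hrt, htr, ⟨hS', hχ⟩, hθ⟩
    · exact .inr ⟨⟨t, hrt, htr, ⟨hbox, hχ⟩, hθ⟩, hSr⟩
  · rintro (⟨t, hrt, htr, ⟨hS', hχ⟩, hθ⟩ | ⟨⟨t, hrt, htr, ⟨hbox, hχ⟩, hθ⟩, hSr⟩)
    · exact ⟨t, hrt, htr, ⟨(split hrt htr).2 (.inl hS'), hχ⟩, hθ⟩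
    · exact ⟨t, hrt, htr, ⟨(split hrt htr).2 (.inr ⟨hbox, hSr⟩), hχ⟩, hθ⟩

/-- `θ U_{(0,q)} ((φ S ψ) ∧ χ) ↔
[θ U_{(0,q)} ((φ S_{(0,q)} ψ) ∧ χ)] ∨
[(θ U_{(0,q)} (■_{(0,q)} φ ∧ χ)) ∧ (φ S ψ)]`. -/
theorem until_extract_since {P : Type*} [Countable P] (φ ψ χ θ : MTL P)
    (q : ℚ≥0) (hq : 0 < q) :
    MTL.Equiv
      (.until (ivLT q) θ (.and (.since ivInf φ ψ) χ))
      (MTL.or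
        (.until (ivLT q) θ (.and (.since (ivLT q) φ ψ) χ))
        (.and (.until (ivLT q) θ (.and (MTL.pbox (ivLT q) φ) χ))
              (.since ivInf φ ψ))) :=
  until_extract_since_general φ ψ χ θ q
end

section
/- For all MTL formulas φ, ψ, χ, θ and every rational q > 0, the following equivalence holds over all signals: ((φ S ψ) ∨ χ) U_{(0,q)} θ ↔ [((φ S_{(0,q)} ψ) ∨ χ) U_{(0,q)} θ] ∨ [((■_{(0,q)} φ ∨ (φ S_{(0,q)} ψ) ∨ χ) U_{(0,q)} θ) ∧ (φ S ψ)]. -/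
open scoped NNRat

namespace MTLAux

lemma mem_ivLT (q : ℚ≥0) (x : ℝ) : (ivLT q).mem x ↔ 0 < x ∧ x < (q : ℝ) := by
  simp [ivLT, MTLIv.mem]

lemma mem_ivInf (x : ℝ) : ivInf.mem x ↔ 0 < x := by
  simp [ivInf, MTLIv.mem]

lemma sat_or {P : Type*} (f : ℝ → Set P) (a b : MTL P) (r : ℝ) :
    (MTL.or a b).sat f r ↔ a.sat f r ∨ b.sat f r := by
  simp only [MTL.or, MTL.sat]
  tauto

lemma sat_pbox {P : Type*} (f : ℝ → Set P) (q : ℚ≥0) (φ : MTL P) (u : ℝ) :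
    (MTL.pbox (ivLT q) φ).sat f u ↔ ∀ s, s < u → u - s < (q : ℝ) → φ.sat f s := by
  simp only [MTL.pbox, MTL.pdia, MTL.sat]
  constructor
  · intro h s hsu hq
    by_contra hns
    exact h ⟨s, hsu, (mem_ivLT q _).mpr ⟨by linarith, hq⟩, hns, fun _ _ _ => trivial⟩
  · rintro h ⟨s, hsu, hm, hns, -⟩
    obtain ⟨h0, hq⟩ := (mem_ivLT q _).mp hm
    exact hns (h s hsu hq)

end MTLAux

open MTLAux in
/-- `((φ S ψ) ∨ χ) U_{(0,q)} θ ↔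
[((φ S_{(0,q)} ψ) ∨ χ) U_{(0,q)} θ] ∨
[((■_{(0,q)} φ ∨ (φ S_{(0,q)} ψ) ∨ χ) U_{(0,q)} θ) ∧ (φ S ψ)]`. -/
theorem until_extract_since_left {P : Type*} [Countable P] (φ ψ χ θ : MTL P)
    (q : ℚ≥0) (hq : 0 < q) :
    MTL.Equiv
      (.until (ivLT q) (MTL.or (.since ivInf φ ψ) χ) θ)
      (MTL.or
        (.until (ivLT q) (MTL.or (.since (ivLT q) φ ψ) χ) θ)
        (.and
          (.until (ivLT q)
            (MTL.or (MTL.pbox (ivLT q) φ) (MTL.or (.since (ivLT q) φ ψ) χ)) θ)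
          (.since ivInf φ ψ))) := by
  intro f r
  rw [sat_or]
  constructor
  · rintro ⟨t, hrt, hmem, hθ, hu⟩
    obtain ⟨-, htq⟩ := (mem_ivLT q _).mp hmem
    by_cases hA :
        (MTL.until (ivLT q) (MTL.or (.since (ivLT q) φ ψ) χ) θ).sat f r
    · exact Or.inl hA
    · refine Or.inr ?_
      have hne : ¬ ∀ u, r < u → u < t →
          (MTL.or (.since (ivLT q) φ ψ) χ).sat f u := by
        intro h; exact hA ⟨t, hrt, hmem, hθ, h⟩
      push_neg at hne
      obtain ⟨u₀, hru, hut, hnu⟩ := hne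
      rw [sat_or] at hnu
      push_neg at hnu
      obtain ⟨hns, hnχ⟩ := hnu
      have hS : (MTL.since ivInf φ ψ).sat f u₀ := by
        rcases (sat_or f _ _ _).mp (hu u₀ hru hut) with h | h
        · exact h
        · exact absurd h hnχ
      obtain ⟨s, hsu, hmem', hψs, hφ⟩ := hS
      have hqs : (q : ℝ) ≤ u₀ - s := by
        by_contra h
        push_neg at h
        exact hns ⟨s, hsu, (mem_ivLT q _).mpr ⟨by linarith, h⟩, hψs, hφ⟩
      have hq0 : (0 : ℝ) < (q : ℝ) := by exact_mod_cast hq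
      have hsr : s < r := by linarith
      constructor
      · -- the until part with pbox disjunct
        refine ⟨t, hrt, hmem, hθ, fun u hru' hut' => ?_⟩
        rw [sat_or, sat_or]
        rcases (sat_or f _ _ _).mp (hu u hru' hut') with hSu | hχu
        · obtain ⟨s', hsu', hm', hψ', hφ'⟩ := hSu
          have h0' : 0 < u - s' := (mem_ivInf _).mp hm'
          by_cases hcase : u - s' < (q : ℝ)
          · exact Or.inr (Or.inl ⟨s', hsu', (mem_ivLT q _).mpr ⟨h0', hcase⟩, hψ', hφ'⟩)
          · push_neg at hcase
            refine Or.inl ((sat_pbox f q φ u).mpr fun v hvu hvq => ?_)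
            exact hφ' v (by linarith) hvu
        · exact Or.inr (Or.inr hχu)
      · -- (φ S ψ) at r
        exact ⟨s, hsr, (mem_ivInf _).mpr (by linarith), hψs,
          fun v hv1 hv2 => hφ v hv1 (by linarith)⟩
  · rintro (⟨t, hrt, hmem, hθ, hu⟩ | ⟨⟨t, hrt, hmem, hθ, hu⟩, hSr⟩)
    · refine ⟨t, hrt, hmem, hθ, fun u hru hut => ?_⟩
      rw [sat_or]
      rcases (sat_or f _ _ _).mp (hu u hru hut) with h | h
      · obtain ⟨s, hsu, hm, hψ', hφ'⟩ := h
        obtain ⟨h0, -⟩ := (mem_ivLT q _).mp hm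
        exact Or.inl ⟨s, hsu, (mem_ivInf _).mpr h0, hψ', hφ'⟩
      · exact Or.inr h
    · obtain ⟨-, htq⟩ := (mem_ivLT q _).mp hmem
      obtain ⟨s, hsr, hm, hψs, hφr⟩ := hSr
      refine ⟨t, hrt, hmem, hθ, fun u hru hut => ?_⟩
      rw [sat_or]
      rcases (sat_or f _ _ _).mp (hu u hru hut) with hbox | h
      · -- pbox case: build (φ S ψ)(u) from (φ S ψ)(r)
        rw [sat_pbox] at hbox
        refine Or.inl ⟨s, by linarith, (mem_ivInf _).mpr (by linarith), hψs,
          fun v hv1 hv2 => ?_⟩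
        rcases lt_or_ge v r with hvr | hvr
        · exact hφr v hv1 hvr
        · exact hbox v hv2 (by linarith)
      · rcases (sat_or f _ _ _).mp h with h' | h'
        · obtain ⟨s', hsu', hm', hψ', hφ'⟩ := h'
          obtain ⟨h0, -⟩ := (mem_ivLT q _).mp hm'
          exact Or.inl ⟨s', hsu', (mem_ivInf _).mpr h0, hψ', hφ'⟩
        · exact Or.inr h'
end

section
/- For all MTL formulas φ, ψ and all rationals p, q with 0 < p < q, the following equivalence holds over all signals: φ U_{(p,q)} ψ ↔ □_{(0,p)} φ ∧ ◇_{={p}} (φ ∧ (φ U_{(0,q−p)} ψ)). -/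
open scoped NNRat

/-- for `0 < p < q`,
`φ U_{(p,q)} ψ ↔ □_{(0,p)} φ ∧ ◇_{=p} (φ ∧ (φ U_{(0,q−p)} ψ))`. -/
theorem until_shift_interval {P : Type*} [Countable P] (φ ψ : MTL P)
    (p q : ℚ≥0) (hp : 0 < p) (hpq : p < q) :
    MTL.Equiv
      (.until (ivOO p q) φ ψ)
      (.and (MTL.box (ivLT p) φ)
        (MTL.dia (ivEQ p) (.and φ (.until (ivLT (q - p)) φ ψ)))) := by
  intro f r
  have hp' : (0:ℝ) < p := by exact_mod_cast hp
  have hpq' : (p:ℝ) < q := by exact_mod_cast hpq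
  have hsub : ((q - p : ℚ≥0) : ℝ) = (q:ℝ) - p := by
    have h2 : ((q - p : ℚ≥0) : ℚ) = (q:ℚ) - p := NNRat.coe_sub hpq.le
    rw [← Rat.cast_nnratCast, ← Rat.cast_nnratCast (K := ℝ) p, ← Rat.cast_nnratCast (K := ℝ) q,
      h2, Rat.cast_sub]
  simp only [MTL.sat, MTL.box, MTL.dia, MTLIv.mem, ivOO, ivLT, ivEQ,
    Bool.false_eq_true, if_false, if_true, WithTop.coe_eq_coe, forall_eq',
    NNRat.cast_zero, not_exists, not_and]
  constructor
  · rintro ⟨t, hrt, ⟨-, hpt, htq⟩, hψ, hφ⟩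
    refine ⟨fun x hrx hm hnφ _ => hnφ (hφ x hrx (by linarith [hm.2.2])),
      r + p, by linarith, ⟨by linarith, by linarith, by linarith⟩,
      ⟨hφ (r + p) (by linarith) (by linarith),
        t, by linarith, ⟨by linarith, by linarith, by rw [hsub]; linarith⟩,
        hψ, fun u h1 h2 => hφ u (by linarith) h2⟩,
      fun _ _ _ => trivial⟩
  · rintro ⟨hbox, t, hrt, ⟨-, hpe1, hpe2⟩,
      ⟨hφt, s, hts, ⟨-, -, hsq⟩, hψ, hφ2⟩, -⟩
    rw [hsub] at hsq
    have ht : t = r + p := by linarith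
    refine ⟨s, by linarith, ⟨by linarith, by linarith, by linarith⟩, hψ,
      fun u h1 h2 => ?_⟩
    rcases lt_trichotomy u t with h | h | h
    · by_contra hn
      exact hbox u h1 ⟨by linarith, by linarith, by linarith⟩ hn
        (fun _ _ _ => trivial)
    · exact h ▸ hφt
    · exact hφ2 u h (by linarith)
end
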